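/- arXiv:2306.01744 — 6 statements merged into one kernel-verified Lean document; each statement's English description precedes it below -/
import Mathlib

section
/- A set is a weak abductive explanation if and only if it hits every contrastive explanation: for X ⊆ Fin m, WAXp(X) holds if and only if X ∩ Y ≠ ∅ for every Y ⊆ Fin m that is a CXp. -/
/-- `WAXp κ v X` holds iff fixing the features of `X` to the values of `v`
suffices for the prediction `κ v`. -/
def WAXp {m : ℕ} {D : Fin m → Type} {K : Type}
    (κ : (∀ i, D i) → K) (v : ∀ i, D i) (X : Finset (Fin m)) : Prop :=
  ∀ x : ∀ i, D i, (∀ i ∈ X, x i = v i) → κ x = κ v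

/-- `X` is an AXp iff it is a subset-minimal weak AXp. -/
def AXp {m : ℕ} {D : Fin m → Type} {K : Type}
    (κ : (∀ i, D i) → K) (v : ∀ i, D i) (X : Finset (Fin m)) : Prop :=
  WAXp κ v X ∧ ∀ X' ⊂ X, ¬ WAXp κ v X'

/-- `WCXp κ v Y` holds iff keeping features outside `Y` fixed to the values of `v`,
the prediction can be changed. -/
def WCXp {m : ℕ} {D : Fin m → Type} {K : Type}
    (κ : (∀ i, D i) → K) (v : ∀ i, D i) (Y : Finset (Fin m)) : Prop :=
  ∃ x : ∀ i, D i, (∀ i ∉ Y, x i = v i) ∧ κ x ≠ κ v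

/-- `Y` is a CXp iff it is a subset-minimal weak CXp. -/
def CXp {m : ℕ} {D : Fin m → Type} {K : Type}
    (κ : (∀ i, D i) → K) (v : ∀ i, D i) (Y : Finset (Fin m)) : Prop :=
  WCXp κ v Y ∧ ∀ Y' ⊂ Y, ¬ WCXp κ v Y'

/-- `X` is a weak AXp iff it hits every CXp. -/
theorem waxp_iff_hits_all_cxp {m : ℕ} {D : Fin m → Type}
    [∀ i, Nonempty (D i)] {K : Type}
    (κ : (∀ i, D i) → K) (v : ∀ i, D i) (X : Finset (Fin m)) :
    WAXp κ v X ↔ ∀ Y : Finset (Fin m), CXp κ v Y → X ∩ Y ≠ ∅ := by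
  have shrink : ∀ Y : Finset (Fin m), WCXp κ v Y → ∃ Y' ⊆ Y, CXp κ v Y' := by
    intro Y
    induction Y using Finset.strongInductionOn with
    | _ Y ih =>
      intro hY
      by_cases h : ∀ Y' ⊂ Y, ¬ WCXp κ v Y'
      · exact ⟨Y, le_refl Y, hY, h⟩
      · push_neg at h
        obtain ⟨Y', hsub, hY'⟩ := h
        obtain ⟨Z, hZsub, hZ⟩ := ih Y' hsub hY'
        exact ⟨Z, hZsub.trans hsub.subset, hZ⟩
  constructor
  · intro hX Y hY hXY
    obtain ⟨⟨x, hx, hne⟩, _⟩ := hY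
    apply hne
    apply hX
    intro i hi
    apply hx
    intro hiY
    exact (Finset.notMem_empty i) (hXY ▸ Finset.mem_inter.mpr ⟨hi, hiY⟩)
  · intro h x hx
    by_contra hne
    have hW : WCXp κ v Xᶜ := ⟨x, fun i hi => hx i (by simpa using hi), hne⟩
    obtain ⟨Y, hYsub, hY⟩ := shrink _ hW
    apply h Y hY
    rw [Finset.eq_empty_iff_forall_notMem]
    intro i hi
    rcases Finset.mem_inter.mp hi with ⟨hiX, hiY⟩
    exact (Finset.mem_compl.mp (hYsub hiY)) hiX
end

section
/- A set is a weak contrastive explanation if and only if it hits every abductive explanation: for Y ⊆ Fin m, WCXp(Y) holds if and only if Y ∩ X ≠ ∅ for every X ⊆ Fin m that is an AXp. -/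
lemma exists_axp_subset {m : ℕ} {D : Fin m → Type} {K : Type}
    (κ : (∀ i, D i) → K) (v : ∀ i, D i) (Z : Finset (Fin m)) :
    WAXp κ v Z → ∃ X ⊆ Z, AXp κ v X := by
  induction Z using Finset.strongInduction with
  | _ Z ih =>
    intro h
    by_cases hc : ∀ X' ⊂ Z, ¬ WAXp κ v X'
    · exact ⟨Z, le_refl _, h, hc⟩
    · push_neg at hc
      obtain ⟨X', hX', hW⟩ := hc
      obtain ⟨X, hXs, hA⟩ := ih X' hX' hW
      exact ⟨X, hXs.trans hX'.subset, hA⟩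

/-- `Y` is a weak CXp iff it hits every AXp. -/
theorem wcxp_iff_hits_all_axp {m : ℕ} {D : Fin m → Type}
    [∀ i, Nonempty (D i)] {K : Type}
    (κ : (∀ i, D i) → K) (v : ∀ i, D i) (Y : Finset (Fin m)) :
    WCXp κ v Y ↔ ∀ X : Finset (Fin m), AXp κ v X → Y ∩ X ≠ ∅ := by
  constructor
  · rintro ⟨x, hx, hne⟩ X ⟨hW, -⟩ hYX
    apply hne
    apply hW
    intro i hiX
    apply hx
    intro hiY
    exact Finset.notMem_empty i (hYX ▸ Finset.mem_inter.mpr ⟨hiY, hiX⟩)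
  · intro h
    by_contra hn
    unfold WCXp at hn
    push_neg at hn
    have hW : WAXp κ v Yᶜ := by
      intro x hx
      exact hn x (fun i hi => hx i (Finset.mem_compl.mpr hi))
    obtain ⟨X, hXs, hA⟩ := exists_axp_subset κ v Yᶜ hW
    apply h X hA
    ext i
    simp only [Finset.mem_inter, Finset.notMem_empty, iff_false]
    rintro ⟨hiY, hiX⟩
    exact Finset.mem_compl.mp (hXs hiX) hiY
end

section
/- Minimal hitting-set duality, first direction: a set X ⊆ Fin m is an AXp if and only if X is a minimal hitting set of the family ℂ = {Y ⊆ Fin m | Y is a CXp}. -/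
/-- `H` is a minimal hitting set of the family `𝔖` of subsets of `Fin m`. -/
def MHS {m : ℕ} (𝔖 : Set (Finset (Fin m))) (H : Finset (Fin m)) : Prop :=
  (∀ S ∈ 𝔖, H ∩ S ≠ ∅) ∧ ∀ H' ⊂ H, ¬ (∀ S ∈ 𝔖, H' ∩ S ≠ ∅)

private lemma waxp_iff_hits {m : ℕ} {D : Fin m → Type} {K : Type}
    (κ : (∀ i, D i) → K) (v : ∀ i, D i) (X : Finset (Fin m)) :
    WAXp κ v X ↔ ∀ Y, WCXp κ v Y → X ∩ Y ≠ ∅ := by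
  classical
  constructor
  · rintro h Y ⟨x, hx, hne⟩ hempty
    refine hne (h x fun i hi => hx i ?_)
    intro hiY
    exact Finset.notMem_empty i (hempty ▸ Finset.mem_inter.mpr ⟨hi, hiY⟩)
  · intro h x hx
    by_contra hne
    set Y : Finset (Fin m) := Finset.univ.filter (fun i => x i ≠ v i) with hYdef
    have hY : WCXp κ v Y := by
      refine ⟨x, fun i hi => ?_, hne⟩
      by_contra hxi
      exact hi (Finset.mem_filter.mpr ⟨Finset.mem_univ i, hxi⟩)
    obtain ⟨i, hiXY⟩ := Finset.nonempty_iff_ne_empty.mpr (h Y hY)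
    have hiX := (Finset.mem_inter.mp hiXY).1
    have hiY := (Finset.mem_inter.mp hiXY).2
    exact (Finset.mem_filter.mp hiY).2 (hx i hiX)

private lemma wcxp_exists_cxp {m : ℕ} {D : Fin m → Type} {K : Type}
    (κ : (∀ i, D i) → K) (v : ∀ i, D i) :
    ∀ Y : Finset (Fin m), WCXp κ v Y → ∃ Y' ⊆ Y, CXp κ v Y' := by
  intro Y
  induction Y using Finset.strongInductionOn with
  | _ Y ih =>
    intro hY
    by_cases h : ∀ Y' ⊂ Y, ¬ WCXp κ v Y'
    · exact ⟨Y, Finset.Subset.refl _, hY, h⟩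
    · push_neg at h
      obtain ⟨Y', hsub, hY'⟩ := h
      obtain ⟨Z, hZ, hZc⟩ := ih Y' hsub hY'
      exact ⟨Z, hZ.trans hsub.subset, hZc⟩

/-- MHS duality, first direction: the AXp's are exactly the minimal hitting sets of
the set of all CXp's. -/
theorem axp_iff_mhs_of_cxps {m : ℕ} {D : Fin m → Type}
    [∀ i, Nonempty (D i)] {K : Type}
    (κ : (∀ i, D i) → K) (v : ∀ i, D i) (X : Finset (Fin m)) :
    AXp κ v X ↔ MHS {Y : Finset (Fin m) | CXp κ v Y} X := by
  have key : ∀ H : Finset (Fin m),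
      WAXp κ v H ↔ ∀ S ∈ {Y : Finset (Fin m) | CXp κ v Y}, H ∩ S ≠ ∅ := by
    intro H
    rw [waxp_iff_hits]
    constructor
    · intro h S hS
      exact h S hS.1
    · intro h Y hY
      obtain ⟨Z, hZY, hZ⟩ := wcxp_exists_cxp κ v Y hY
      intro he
      refine h Z hZ ?_
      have : H ∩ Z ⊆ H ∩ Y := Finset.inter_subset_inter (Finset.Subset.refl _) hZY
      exact Finset.subset_empty.mp (he ▸ this)
  simp only [AXp, MHS, key]
end

section
/- The union of all abductive explanations equals the union of all contrastive explanations: ⋃ {X ⊆ Fin m | X is an AXp} = ⋃ {Y ⊆ Fin m | Y is a CXp}. -/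
lemma exists_min_subset {α : Type*} [DecidableEq α] {P : Finset α → Prop} :
    ∀ {S : Finset α}, P S → ∃ T ⊆ S, P T ∧ ∀ T' ⊂ T, ¬ P T' := by
  intro S
  induction S using Finset.strongInduction with
  | _ S ih =>
    intro hS
    by_cases hm : ∀ T' ⊂ S, ¬ P T'
    · exact ⟨S, le_refl _, hS, hm⟩
    · push_neg at hm
      obtain ⟨T', hsub, hP⟩ := hm
      obtain ⟨T, hT1, hT2, hT3⟩ := ih T' hsub hP
      exact ⟨T, hT1.trans hsub.subset, hT2, hT3⟩

/-- The union of all AXp's equals the union of all CXp's. -/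
theorem union_axps_eq_union_cxps {m : ℕ} {D : Fin m → Type}
    [∀ i, Nonempty (D i)] {K : Type}
    (κ : (∀ i, D i) → K) (v : ∀ i, D i) :
    ⋃ X ∈ {X : Finset (Fin m) | AXp κ v X}, (X : Set (Fin m)) =
      ⋃ Y ∈ {Y : Finset (Fin m) | CXp κ v Y}, (Y : Set (Fin m)) := by
  classical
  ext i
  simp only [Set.mem_iUnion, Set.mem_setOf_eq, Finset.mem_coe]
  constructor
  · rintro ⟨X, ⟨hX, hXmin⟩, hiX⟩
    have h1 : ¬ WAXp κ v (X.erase i) := hXmin _ (Finset.erase_ssubset hiX)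
    simp only [WAXp, not_forall] at h1
    obtain ⟨x, hx, hxc⟩ := h1
    set Y₀ : Finset (Fin m) := Finset.univ.filter (fun j => x j ≠ v j) with hY₀def
    have hY₀ : WCXp κ v Y₀ := by
      refine ⟨x, fun j hj => ?_, hxc⟩
      by_contra hne
      exact hj (by simp [hY₀def, hne])
    obtain ⟨Y, hYsub, hYw, hYmin⟩ := exists_min_subset hY₀
    refine ⟨Y, ⟨hYw, hYmin⟩, ?_⟩
    by_contra hiY
    obtain ⟨x', hx', hx'c⟩ := hYw
    apply hx'c
    apply hX
    intro j hjX
    apply hx'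
    intro hjY
    have hxj : x j ≠ v j := by simpa [hY₀def] using hYsub hjY
    rcases eq_or_ne j i with rfl | hji
    · exact hiY hjY
    · exact hxj (hx j (Finset.mem_erase.mpr ⟨hji, hjX⟩))
  · rintro ⟨Y, ⟨hY, hYmin⟩, hiY⟩
    have h1 : ¬ WCXp κ v (Y.erase i) := hYmin _ (Finset.erase_ssubset hiY)
    have hX₀ : WAXp κ v ((Y.erase i)ᶜ) := by
      intro x hx
      by_contra hc
      exact h1 ⟨x, fun j hj => hx j (Finset.mem_compl.mpr hj), hc⟩
    obtain ⟨X, hXsub, hXw, hXmin⟩ := exists_min_subset hX₀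
    refine ⟨X, ⟨hXw, hXmin⟩, ?_⟩
    by_contra hiX
    obtain ⟨x, hx, hxc⟩ := hY
    apply hxc
    apply hXw
    intro j hjX
    apply hx
    intro hjY
    have hc := Finset.mem_compl.mp (hXsub hjX)
    rcases eq_or_ne j i with rfl | hji
    · exact hiX hjX
    · exact hc (Finset.mem_erase.mpr ⟨hji, hjY⟩)
end

section
/- A feature belongs to some abductive explanation if and only if it belongs to some contrastive explanation: for every i ∈ Fin m, (∃ X ⊆ Fin m, X is an AXp and i ∈ X) ↔ (∃ Y ⊆ Fin m, Y is a CXp and i ∈ Y). -/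
private lemma exists_minimal_subset {α : Type*} [DecidableEq α] {P : Finset α → Prop} :
    ∀ X : Finset α, P X → ∃ Y ⊆ X, P Y ∧ ∀ Z ⊂ Y, ¬ P Z := by
  intro X
  induction X using Finset.strongInduction with
  | _ X ih =>
    intro hX
    by_cases h : ∀ Z ⊂ X, ¬ P Z
    · exact ⟨X, le_refl _, hX, h⟩
    · push_neg at h
      obtain ⟨Z, hZX, hZ⟩ := h
      obtain ⟨Y, hYZ, hY⟩ := ih Z hZX hZ
      exact ⟨Y, hYZ.trans hZX.subset, hY⟩

/-- A feature belongs to some AXp iff it belongs to some CXp. -/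
theorem mem_some_axp_iff_mem_some_cxp {m : ℕ} {D : Fin m → Type}
    [∀ i, Nonempty (D i)] {K : Type}
    (κ : (∀ i, D i) → K) (v : ∀ i, D i) (i : Fin m) :
    (∃ X : Finset (Fin m), AXp κ v X ∧ i ∈ X) ↔
      (∃ Y : Finset (Fin m), CXp κ v Y ∧ i ∈ Y) := by
  classical
  constructor
  · rintro ⟨X, ⟨hXw, hXmin⟩, hiX⟩
    have hnot : ¬ WAXp κ v (X.erase i) := hXmin _ (Finset.erase_ssubset hiX)
    unfold WAXp at hnot
    push_neg at hnot
    obtain ⟨x, hx, hne⟩ := hnot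
    set Y₀ : Finset (Fin m) := Finset.univ.filter (fun j => x j ≠ v j) with hY₀
    have hW : WCXp κ v Y₀ := by
      refine ⟨x, fun j hj => ?_, hne⟩
      by_contra h
      exact hj (by simp [hY₀, h])
    obtain ⟨Y, hYsub, hYw, hYmin⟩ := exists_minimal_subset Y₀ hW
    refine ⟨Y, ⟨hYw, hYmin⟩, ?_⟩
    by_contra hiY
    obtain ⟨x'', hx'', hne''⟩ := hYw
    apply hne''
    apply hXw
    intro j hjX
    by_cases hjY : j ∈ Y
    · exfalso
      have hj0 : j ∈ Y₀ := hYsub hjY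
      have : x j ≠ v j := by simpa [hY₀] using hj0
      have hji : j ≠ i := fun h => hiY (h ▸ hjY)
      exact this (hx j (Finset.mem_erase.mpr ⟨hji, hjX⟩))
    · exact hx'' j hjY
  · rintro ⟨Y, ⟨hYw, hYmin⟩, hiY⟩
    have hnot : ¬ WCXp κ v (Y.erase i) := hYmin _ (Finset.erase_ssubset hiY)
    unfold WCXp at hnot
    push_neg at hnot
    set X₀ : Finset (Fin m) := (Y.erase i)ᶜ with hX₀
    have hW : WAXp κ v X₀ := by
      intro x hxX
      apply hnot x
      intro j hj
      exact hxX j (Finset.mem_compl.mpr hj)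
    obtain ⟨X, hXsub, hXw, hXmin⟩ := exists_minimal_subset X₀ hW
    refine ⟨X, ⟨hXw, hXmin⟩, ?_⟩
    by_contra hiX
    obtain ⟨x, hx, hne⟩ := hYw
    apply hne
    apply hXw
    intro j hjX
    apply hx
    intro hjY
    have hj0 : j ∈ X₀ := hXsub hjX
    have hji : j ≠ i := fun h => hiX (h ▸ hjX)
    have : j ∉ Y.erase i := Finset.mem_compl.mp hj0
    exact this (Finset.mem_erase.mpr ⟨hji, hjY⟩)
end

section
/- Monotonicity implies that relevancy can equivalently be defined via contrastive explanations: for every i ∈ Fin m, feature i is irrelevant (belongs to no AXp) if and only if i belongs to no CXp. -/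
/-- Extract a subset-minimal set satisfying `P` below a given set. -/
lemma exists_minimal_subset_s15 {m : ℕ} (P : Finset (Fin m) → Prop)
    (S : Finset (Fin m)) (h : P S) :
    ∃ T ⊆ S, P T ∧ ∀ T' ⊂ T, ¬ P T' := by
  classical
  induction S using Finset.strongInduction with
  | _ S ih =>
    by_cases hS : ∃ S' ⊂ S, P S'
    · obtain ⟨S', hsub, hP⟩ := hS
      obtain ⟨T, hT, hPT, hmin⟩ := ih S' hsub hP
      exact ⟨T, hT.trans hsub.subset, hPT, hmin⟩
    · exact ⟨S, le_refl S, h, fun T' hT' hPT' => hS ⟨T', hT', hPT'⟩⟩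

/-- Any weak AXp intersects any weak CXp. -/
lemma waxp_inter_wcxp {m : ℕ} {D : Fin m → Type} {K : Type}
    (κ : (∀ i, D i) → K) (v : ∀ i, D i) {X Y : Finset (Fin m)}
    (hX : WAXp κ v X) (hY : WCXp κ v Y) : ∃ j, j ∈ X ∧ j ∈ Y := by
  classical
  by_contra h
  push_neg at h
  obtain ⟨x, hx, hne⟩ := hY
  exact hne (hX x fun j hj => hx j (h j hj))

/-- A feature is irrelevant (belongs to no AXp) iff it belongs to no CXp. -/
theorem irrelevant_iff_in_no_cxp {m : ℕ} {D : Fin m → Type}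
    [∀ i, Nonempty (D i)] {K : Type}
    (κ : (∀ i, D i) → K) (v : ∀ i, D i) (i : Fin m) :
    (∀ X : Finset (Fin m), AXp κ v X → i ∉ X) ↔
      (∀ Y : Finset (Fin m), CXp κ v Y → i ∉ Y) := by
  classical
  constructor
  · intro h Y hY hiY
    -- Y is a CXp containing i; build an AXp containing i
    obtain ⟨hWY, hminY⟩ := hY
    have hsub : Y \ {i} ⊂ Y := by
      apply Finset.sdiff_ssubset (by simpa using hiY)
      simp
    have hnW : ¬ WCXp κ v (Y \ {i}) := hminY _ hsub
    have hWA : WAXp κ v ((Y \ {i})ᶜ) := by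
      intro x hx
      by_contra hne
      exact hnW ⟨x, fun j hj => hx j (by simpa using hj), hne⟩
    obtain ⟨X, hXsub, hWX, hXmin⟩ := exists_minimal_subset_s15 (WAXp κ v) _ hWA
    obtain ⟨j, hjX, hjY⟩ := waxp_inter_wcxp κ v hWX hWY
    have hji : j = i := by
      have := hXsub hjX
      simp [Finset.mem_compl, Finset.mem_sdiff, hjY] at this
      exact this
    exact h X ⟨hWX, hXmin⟩ (hji ▸ hjX)
  · intro h X hX hiX
    obtain ⟨hWX, hminX⟩ := hX
    have hsub : X \ {i} ⊂ X := by
      apply Finset.sdiff_ssubset (by simpa using hiX)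
      simp
    have hnW : ¬ WAXp κ v (X \ {i}) := hminX _ hsub
    have hWC : WCXp κ v ((X \ {i})ᶜ) := by
      rw [WAXp] at hnW
      push_neg at hnW
      obtain ⟨x, hx, hne⟩ := hnW
      exact ⟨x, fun j hj => hx j (by simpa using hj), hne⟩
    obtain ⟨Y, hYsub, hWY, hYmin⟩ := exists_minimal_subset_s15 (WCXp κ v) _ hWC
    obtain ⟨j, hjX, hjY⟩ := waxp_inter_wcxp κ v hWX hWY
    have hji : j = i := by
      have := hYsub hjY
      simp [Finset.mem_compl, Finset.mem_sdiff, hjX] at this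
      exact this
    exact h Y ⟨hWY, hYmin⟩ (hji ▸ hjY)
end
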